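/- If every ample concept class admits a corner peeling (i.e., is dismantlable), then for every n the n-dimensional cross-polytope O_n is extendably shellable: every partial shelling of O_n can be extended to a partial shelling containing all 2^n facets. -/

import Mathlib

variable {X : Type} [Fintype X] [DecidableEq X]

/-- Hamming distance between two subsets of `X` (size of symmetric difference). -/
def hdist (c c' : Finset X) : ℕ := ((c \ c') ∪ (c' \ c)).card

/-- The restriction `C|Y = {c ∩ Y : c ∈ C}`. -/
def restrictTo (C : Finset (Finset X)) (Y : Finset X) : Finset (Finset X) :=
  C.image (· ∩ Y)

/-- `Y` is shattered by `C`, i.e. `C|Y = 2^Y`. -/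
def Shatters (C : Finset (Finset X)) (Y : Finset X) : Prop :=
  ∀ s ∈ Y.powerset, ∃ c ∈ C, c ∩ Y = s

instance (C : Finset (Finset X)) : DecidablePred (Shatters C) := fun _ => by
  unfold Shatters; infer_instance

/-- The family `X̄(C)` of all sets shattered by `C`. -/
def shatteredSets (C : Finset (Finset X)) : Finset (Finset X) :=
  Finset.univ.filter (Shatters C)

/-- The VC dimension of `C`: maximum size of a shattered set. -/
def vcDim (C : Finset (Finset X)) : ℕ := (shatteredSets C).sup Finset.card

/-- `C` is ample: `|C| = |X̄(C)|`. -/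
def IsAmple (C : Finset (Finset X)) : Prop := C.card = (shatteredSets C).card

/-- `C` is a maximum class of VC dimension `d`. -/
def IsMaximumClass (C : Finset (Finset X)) (d : ℕ) : Prop :=
  vcDim C = d ∧ C.card = ∑ i ∈ Finset.range (d + 1), (Fintype.card X).choose i

/-- `B` is a cube with support `Y`: `B = {t ∪ s : s ⊆ Y}` for some `t ⊆ X \ Y`. -/
def IsCubeS (B : Finset (Finset X)) (Y : Finset X) : Prop :=
  ∃ t : Finset X, t ∩ Y = ∅ ∧ B = Y.powerset.image (fun s => t ∪ s)

/-- `B` is a cube. -/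
def IsCube (B : Finset (Finset X)) : Prop := ∃ Y, IsCubeS B Y

/-- `B` is a cube of `C`: a cube contained in `C`. -/
def IsCubeOf (C B : Finset (Finset X)) : Prop := B ⊆ C ∧ IsCube B

/-- `B` is a maximal cube of `C` (maximal under inclusion among cubes of `C`). -/
def IsMaximalCubeOf (C B : Finset (Finset X)) : Prop :=
  IsCubeOf C B ∧ ∀ B', IsCubeOf C B' → B ⊆ B' → B = B'

/-- `c` is a corner of `C`: a concept of `C` belonging to a unique maximal cube of `C`. -/
def IsCornerOf (C : Finset (Finset X)) (c : Finset X) : Prop :=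
  c ∈ C ∧ ∃! B, IsMaximalCubeOf C B ∧ c ∈ B

/-- The one-inclusion graph `G(C)`. -/
def oneInclusionGraph (C : Finset (Finset X)) : SimpleGraph {c : Finset X // c ∈ C} where
  Adj c c' := hdist c.1 c'.1 = 1
  symm := by
    constructor
    intro a b h
    simpa [hdist, Finset.union_comm] using h
  loopless := by
    constructor
    intro a h
    simp [hdist] at h

/-- `C` is isometric: `G(C)` is connected and graph distances equal Hamming distances. -/
def IsIsometric (C : Finset (Finset X)) : Prop :=
  (oneInclusionGraph C).Connected ∧
  ∀ c c' : {c : Finset X // c ∈ C}, (oneInclusionGraph C).dist c c' = hdist c.1 c'.1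

/-- `C` is weakly isometric: `G(C)` is connected and graph distances equal Hamming
distances for pairs at Hamming distance at most 2. -/
def IsWeaklyIsometric (C : Finset (Finset X)) : Prop :=
  (oneInclusionGraph C).Connected ∧
  ∀ c c' : {c : Finset X // c ∈ C}, hdist c.1 c'.1 ≤ 2 →
    (oneInclusionGraph C).dist c c' = hdist c.1 c'.1

/-- A list of concepts is a corner peeling if it has no duplicates and each element is a
corner of the corresponding level set. -/
def IsCornerPeeling (l : List (Finset X)) : Prop :=
  l.Nodup ∧ ∀ i (h : i < l.length), IsCornerOf ((l.take (i + 1)).toFinset) (l.get ⟨i, h⟩)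

/-- `C` is dismantlable: it admits a corner peeling ordering of all its concepts. -/
def Dismantlable (C : Finset (Finset X)) : Prop :=
  ∃ l : List (Finset X), l.toFinset = C ∧ IsCornerPeeling l

/-- Non-clashing condition for a map `r`. -/
def NonClashing (C : Finset (Finset X)) (r : Finset X → Finset X) : Prop :=
  ∀ c ∈ C, ∀ c' ∈ C, c ≠ c' → c ∩ (r c ∪ r c') ≠ c' ∩ (r c ∪ r c')

/-- `r` is a representation map for `C`: a non-clashing bijection from `C` onto `X̄(C)`. -/
def IsRepMap (C : Finset (Finset X)) (r : Finset X → Finset X) : Prop :=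
  (∀ c ∈ C, r c ∈ shatteredSets C) ∧
  Set.InjOn r ↑C ∧
  (∀ Y ∈ shatteredSets C, ∃ c ∈ C, r c = Y) ∧
  NonClashing C r

/-- `C` admits an unlabeled sample compression scheme of size `k`. -/
def HasUSCS (C : Finset (Finset X)) (k : ℕ) : Prop :=
  ∃ (α : Finset X → Finset X → Finset X) (β : Finset X → Finset X),
    ∀ (Y : Finset X), ∀ c ∈ C,
      α Y (c ∩ Y) ⊆ Y ∧ (α Y (c ∩ Y)).card ≤ k ∧
      β (α Y (c ∩ Y)) ∈ C ∧ β (α Y (c ∩ Y)) ∩ Y = c ∩ Y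

/-- The cube of `2^X` with support `Y` containing `c`. -/
def cubeAt (c Y : Finset X) : Finset (Finset X) :=
  Y.powerset.image (fun s => (c \ Y) ∪ s)

/-- Condition (C1): for every `c ∈ C`, the cube with support `r c` containing `c`
is a cube of `C`. -/
def CondC1 (C : Finset (Finset X)) (r : Finset X → Finset X) : Prop :=
  ∀ c ∈ C, cubeAt c (r c) ⊆ C

/-- Condition (C2): every cube of `C` has a unique concept `c` with `r c ∩ supp B = ∅`. -/
def CondC2 (C : Finset (Finset X)) (r : Finset X → Finset X) : Prop :=
  ∀ B Y, B ⊆ C → IsCubeS B Y → ∃! c, c ∈ B ∧ r c ∩ Y = ∅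

/-- The facet of the cross-polytope corresponding to a subset `c ⊆ X`:
`+x ∈ σ_c` iff `x ∈ c` (where `+x = Sum.inl x` and `-x = Sum.inr x`). -/
def facet (c : Finset X) : Finset (X ⊕ X) :=
  c.image Sum.inl ∪ (Finset.univ \ c).image Sum.inr

/-- A list of facets of the cross-polytope is a partial shelling. -/
def IsPartialShelling (L : List (Finset (X ⊕ X))) : Prop :=
  L.Nodup ∧ ∀ i j, i < j → j < L.length →
    ∃ k < j, ((L.getD k ∅) ∩ (L.getD j ∅)).card = Fintype.card X - 1 ∧
      (L.getD i ∅) ∩ (L.getD j ∅) ⊆ (L.getD k ∅) ∩ (L.getD j ∅)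

/-- `Q` is an incomplete cube for `(C, D)` with support `σ`: a cube of `C` whose
support `σ` is a missed simplex (shattered by `C` but not by `D`). -/
def IsIncompleteCube (C D Q : Finset (Finset X)) (σ : Finset X) : Prop :=
  Q ⊆ C ∧ IsCubeS Q σ ∧ Shatters C σ ∧ ¬ Shatters D σ

/-- `c` is the source of the incomplete cube `Q` with support `σ`:
`c ∈ Q` and `c ∩ σ ∉ D|σ`. -/
def IsSource (D Q : Finset (Finset X)) (σ : Finset X) (c : Finset X) : Prop :=
  c ∈ Q ∧ c ∩ σ ∉ restrictTo D σ

/-- The restriction `C_x = C|(X \ {x})`, with concepts viewed as subsets of `X`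
avoiding `x`. -/
def restrictX (C : Finset (Finset X)) (x : X) : Finset (Finset X) :=
  C.image (·.erase x)

/-- The reduction `C^x = {c ⊆ X \ {x} : c ∈ C and c ∪ {x} ∈ C}`. -/
def reduction (C : Finset (Finset X)) (x : X) : Finset (Finset X) :=
  C.filter (fun c => x ∉ c ∧ insert x c ∈ C)

/-- The interval `B(c,c') = {t : d(c,t) + d(t,c') = d(c,c')}`. -/
def interval (c c' : Finset X) : Finset (Finset X) :=
  Finset.univ.filter (fun t => hdist c t + hdist t c' = hdist c c')

/-- `C'` is convex in `C`. -/
def IsConvexIn (C C' : Finset (Finset X)) : Prop :=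
  ∀ c ∈ C', ∀ c'' ∈ C', interval c c'' ∩ C ⊆ C'

/-- `C'` is locally convex in `C`. -/
def IsLocallyConvexIn (C C' : Finset (Finset X)) : Prop :=
  ∀ c ∈ C', ∀ c'' ∈ C', hdist c c'' = 2 → interval c c'' ∩ C ⊆ C'

/-- `C` is a conditional antimatroid: contains `∅`, closed under intersection, and
every concept is generated by its extremal points. -/
def IsCondAntimatroid (C : Finset (Finset X)) : Prop :=
  ∅ ∈ C ∧ (∀ c ∈ C, ∀ c' ∈ C, c ∩ c' ∈ C) ∧
  ∀ c ∈ C, ∀ c' ∈ C, (c.filter (fun x => c.erase x ∈ C)) ⊆ c' → c ⊆ c'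

/-!
Identify the facet `σ_c` with the concept `c ⊆ X`: two facets share a ridge iff their concepts
are at Hamming distance one, and the shelling condition for `σ_c` after the facets of a list `l`
says precisely that `c` is a corner of the complement `2^X \ l`. Removing a corner keeps a class
ample: ample classes stay ample under intersection with a cube and have no isolated concepts, so
`c` is the only concept of `C` with its trace on the support of its maximal cube, which is thus
shattered by `C` but not by `C \ {c}`, and Pajor's inequality finishes. Hence the complement of a
partial shelling is ample; a corner peeling of it, read backwards, continues the shelling through
all `2^n` facets.
-/

open Finset
open scoped symmDiff

section Hamming

variable {α : Type} [DecidableEq α]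

theorem hdist_eq_card_symmDiff (c c' : Finset α) : hdist c c' = #(c ∆ c') := rfl

theorem hdist_comm (c c' : Finset α) : hdist c c' = hdist c' c := by
  rw [hdist_eq_card_symmDiff, hdist_eq_card_symmDiff, symmDiff_comm]

theorem hdist_pos {c c' : Finset α} (h : c ≠ c') : 0 < hdist c c' := by
  rw [hdist_eq_card_symmDiff, card_pos, symmDiff_nonempty]
  exact h

theorem hdist_eq_one_iff {c t : Finset α} : hdist t c = 1 ↔ ∃ x, t = c ∆ {x} := by
  rw [hdist_eq_card_symmDiff, card_eq_one]
  constructor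
  · rintro ⟨x, hx⟩
    exact ⟨x, by rw [← hx, symmDiff_comm t c, symmDiff_symmDiff_cancel_left]⟩
  · rintro ⟨x, rfl⟩
    exact ⟨x, symmDiff_symmDiff_self' _ _⟩

theorem hdist_le_card [Fintype α] (c c' : Finset α) : hdist c c' ≤ Fintype.card α :=
  card_le_univ _

end Hamming

section Facets

variable {α : Type*} [DecidableEq α]

def facetVertex (c : Finset α) (x : α) : α ⊕ α :=
  if x ∈ c then .inl x else .inr x

theorem facetVertex_injective (c : Finset α) : Function.Injective (facetVertex c) := by
  intro x y h
  unfold facetVertex at h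
  split_ifs at h <;> simpa using h

theorem facetVertex_eq_inl {c : Finset α} {a x : α} :
    facetVertex c a = .inl x ↔ a = x ∧ x ∈ c := by
  unfold facetVertex
  split_ifs <;> aesop

theorem facetVertex_eq_inr {c : Finset α} {a x : α} :
    facetVertex c a = .inr x ↔ a = x ∧ x ∉ c := by
  unfold facetVertex
  split_ifs <;> aesop

theorem facet_injective : Function.Injective (facet (X := X)) := by
  intro c c' h
  ext x
  have := congrArg (Sum.inl x ∈ ·) h
  simpa [facet] using this

theorem facet_inter_facet (c c' : Finset X) :
    facet c ∩ facet c' = (c ∆ c')ᶜ.image (facetVertex c') := by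
  ext (x | x) <;> simp [facet, facetVertex_eq_inl, facetVertex_eq_inr] <;> tauto

theorem card_facet_inter_facet (c c' : Finset X) :
    #(facet c ∩ facet c') = Fintype.card X - hdist c c' := by
  rw [facet_inter_facet, card_image_of_injective _ (facetVertex_injective c'), card_compl,
    hdist_eq_card_symmDiff]

theorem facet_inter_subset_iff (s t c : Finset X) :
    facet t ∩ facet c ⊆ facet s ∩ facet c ↔ s ∆ c ⊆ t ∆ c := by
  rw [facet_inter_facet, facet_inter_facet, image_subset_image_iff (facetVertex_injective c),
    compl_subset_compl]

end Facets

section Cubes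

variable {α : Type} [DecidableEq α]

theorem mem_cubeAt {c Y u : Finset α} : u ∈ cubeAt c Y ↔ c ∆ u ⊆ Y := by
  simp only [cubeAt, mem_image, mem_powerset]
  constructor
  · rintro ⟨s, hs, rfl⟩ x hx
    simp only [mem_symmDiff, mem_union, mem_sdiff] at hx
    tauto
  · intro h
    refine ⟨u ∩ Y, inter_subset_right, ?_⟩
    ext x
    have := @h x
    simp only [mem_symmDiff, mem_union, mem_sdiff, mem_inter] at this ⊢
    tauto

theorem self_mem_cubeAt (c Y : Finset α) : c ∈ cubeAt c Y := by
  simp [mem_cubeAt]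

theorem symmDiff_singleton_mem_cubeAt {c Y : Finset α} {x : α} :
    c ∆ {x} ∈ cubeAt c Y ↔ x ∈ Y := by
  rw [mem_cubeAt, symmDiff_symmDiff_cancel_left, singleton_subset_iff]

theorem cubeAt_mono {c Y Y' : Finset α} (h : Y ⊆ Y') : cubeAt c Y ⊆ cubeAt c Y' :=
  fun _ hu => (mem_cubeAt.1 hu).trans h |> mem_cubeAt.2

theorem isCubeS_cubeAt (c Y : Finset α) : IsCubeS (cubeAt c Y) Y :=
  ⟨c \ Y, sdiff_inter_self Y c, rfl⟩

theorem IsCubeS.eq_cubeAt {B : Finset (Finset α)} {Y c : Finset α} (hB : IsCubeS B Y)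
    (hc : c ∈ B) : B = cubeAt c Y := by
  obtain ⟨t, htY, rfl⟩ := hB
  obtain ⟨s, hs, rfl⟩ := mem_image.1 hc
  have : (t ∪ s) \ Y = t := by
    rw [union_sdiff_distrib, sdiff_eq_empty_iff_subset.2 (mem_powerset.1 hs), union_empty,
      Finset.sdiff_eq_self_iff_disjoint, disjoint_iff_inter_eq_empty, htY]
  rw [cubeAt, this]

theorem shatters_of_cubeAt_subset {C : Finset (Finset α)} {c Y : Finset α}
    (h : cubeAt c Y ⊆ C) : C.Shatters Y := fun u hu =>
  ⟨(c \ Y) ∪ u, h (mem_image_of_mem _ (mem_powerset.2 hu)), by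
    rw [inter_union_distrib_left, inter_sdiff_self, empty_union, inter_eq_right.2 hu]⟩

theorem cubeAt_singleton_subset {C : Finset (Finset α)} {c : Finset α} {x : α} (hc : c ∈ C)
    (hx : c ∆ {x} ∈ C) : cubeAt c {x} ⊆ C := by
  intro u hu
  rcases subset_singleton_iff.1 (mem_cubeAt.1 hu) with h | h
  · rwa [← symmDiff_eq_bot.1 h]
  · rwa [← symmDiff_symmDiff_cancel_left c u, h]

theorem IsCubeOf.exists_maximal {C B₀ : Finset (Finset α)} (h : IsCubeOf C B₀) :
    ∃ B, B₀ ⊆ B ∧ IsMaximalCubeOf C B := by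
  classical
  have mem_cubes {B : Finset (Finset α)} (hB : IsCubeOf C B) :
      B ∈ C.powerset.filter (IsCubeOf C) :=
    mem_filter.2 ⟨mem_powerset.2 hB.1, hB⟩
  obtain ⟨B, hle, hmax⟩ := exists_le_maximal _ (mem_cubes h)
  exact ⟨B, hle, (mem_filter.1 hmax.1).2,
    fun B' hB' hBB' => le_antisymm hBB' (hmax.2 (mem_cubes hB') hBB')⟩

end Cubes

section Corners

def neighborCoords (C : Finset (Finset X)) (c : Finset X) : Finset X :=
  {x | c ∆ {x} ∈ C}

@[simp]
theorem mem_neighborCoords {C : Finset (Finset X)} {c : Finset X} {x : X} :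
    x ∈ neighborCoords C c ↔ c ∆ {x} ∈ C := by
  simp [neighborCoords]

theorem IsCubeOf.subset_cubeAt_neighborCoords {C B : Finset (Finset X)} {c : Finset X}
    (hB : IsCubeOf C B) (hc : c ∈ B) : B ⊆ cubeAt c (neighborCoords C c) := by
  obtain ⟨hBC, Y, hY⟩ := hB
  rw [hY.eq_cubeAt hc] at hBC ⊢
  exact cubeAt_mono fun x hx => mem_neighborCoords.2 (hBC (symmDiff_singleton_mem_cubeAt.2 hx))

theorem isCornerOf_iff {C : Finset (Finset X)} {c : Finset X} :
    IsCornerOf C c ↔ c ∈ C ∧ cubeAt c (neighborCoords C c) ⊆ C := by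
  constructor
  · rintro ⟨hc, B, ⟨hBmax, hcB⟩, huniq⟩
    obtain ⟨hBC, Y, hY⟩ := hBmax.1
    rw [hY.eq_cubeAt hcB] at hBC
    refine ⟨hc, (cubeAt_mono fun x hx => ?_).trans hBC⟩
    obtain ⟨M, hedgeM, hM⟩ :=
      IsCubeOf.exists_maximal ⟨cubeAt_singleton_subset hc (mem_neighborCoords.1 hx), _,
        isCubeS_cubeAt c {x}⟩
    have hxM := hedgeM (symmDiff_singleton_mem_cubeAt.2 (mem_singleton_self x))
    rwa [huniq M ⟨hM, hedgeM (self_mem_cubeAt c _)⟩, hY.eq_cubeAt hcB,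
      symmDiff_singleton_mem_cubeAt] at hxM
  · rintro ⟨hc, hM⟩
    have hMcube : IsCubeOf C (cubeAt c (neighborCoords C c)) := ⟨hM, _, isCubeS_cubeAt _ _⟩
    refine ⟨hc, _, ⟨⟨hMcube, fun B hB hMB => ?_⟩, self_mem_cubeAt c _⟩, ?_⟩
    · exact hMB.antisymm (hB.subset_cubeAt_neighborCoords (hMB (self_mem_cubeAt c _)))
    · rintro B ⟨hBmax, hcB⟩
      exact hBmax.2 _ hMcube (hBmax.1.subset_cubeAt_neighborCoords hcB)

theorem isCornerOf_univ_sdiff_iff {S : Finset (Finset X)} {c : Finset X} :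
    IsCornerOf (univ \ S) c ↔ c ∉ S ∧ ∀ t ∈ S, ∃ x ∈ c ∆ t, c ∆ {x} ∈ S := by
  simp only [isCornerOf_iff, mem_sdiff, mem_univ, true_and]
  refine and_congr_right fun _ => ?_
  simp only [subset_iff, mem_sdiff, mem_univ, true_and, mem_cubeAt, mem_neighborCoords]
  constructor
  · intro h t ht
    by_contra! h'
    exact h h' ht
  · intro h t ht htS
    obtain ⟨x, hx, hxS⟩ := h t htS
    exact ht hx hxS

end Corners

section Shellings

theorem isPartialShelling_append_singleton {L : List (Finset (X ⊕ X))}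
    {σ : Finset (X ⊕ X)} :
    IsPartialShelling (L ++ [σ]) ↔ IsPartialShelling L ∧ σ ∉ L ∧
      ∀ τ ∈ L, ∃ ρ ∈ L, #(ρ ∩ σ) = Fintype.card X - 1 ∧ τ ∩ σ ⊆ ρ ∩ σ := by
  have hget {i : ℕ} (hi : i < L.length) : (L ++ [σ]).getD i ∅ = L.getD i ∅ :=
    List.getD_append _ _ _ _ hi
  have hlast : (L ++ [σ]).getD L.length ∅ = σ := by simp
  simp only [IsPartialShelling, List.nodup_append, List.nodup_singleton, List.mem_singleton,
    List.length_append, List.length_singleton]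
  constructor
  · rintro ⟨⟨hnd, -, hσ⟩, h⟩
    refine ⟨⟨hnd, fun i j hij hj => ?_⟩, fun hmem => hσ σ hmem σ rfl rfl, fun τ hτ => ?_⟩
    · obtain ⟨k, hk, hcard, hsub⟩ := h i j hij (by omega)
      rw [hget (hk.trans hj), hget hj] at hcard hsub
      rw [hget (hij.trans hj)] at hsub
      exact ⟨k, hk, hcard, hsub⟩
    · obtain ⟨i, hi, rfl⟩ := List.getElem_of_mem hτ
      obtain ⟨k, hk, hcard, hsub⟩ := h i L.length hi (by omega)
      rw [hget hk, hlast, List.getD_eq_getElem _ _ hk] at hcard hsub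
      rw [hget hi, List.getD_eq_getElem _ _ hi] at hsub
      exact ⟨_, List.getElem_mem hk, hcard, hsub⟩
  · rintro ⟨⟨hnd, h⟩, hσ, hstep⟩
    refine ⟨⟨hnd, by simp, fun a ha b hb => hb ▸ fun hab => hσ (hab ▸ ha)⟩,
      fun i j hij hj => ?_⟩
    rcases Nat.lt_succ_iff_lt_or_eq.1 hj with hj | rfl
    · rw [hget hj, hget (hij.trans hj)]
      obtain ⟨k, hk, hkj⟩ := h i j hij hj
      exact ⟨k, hk, by rwa [hget (hk.trans hj)]⟩
    · obtain ⟨ρ, hρ, hcard, hsub⟩ := hstep _ (List.getElem_mem hij)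
      obtain ⟨k, hk, rfl⟩ := List.getElem_of_mem hρ
      refine ⟨k, hk, ?_⟩
      rw [hget hk, hget hij, hlast, List.getD_eq_getElem _ _ hk, List.getD_eq_getElem _ _ hij]
      exact ⟨hcard, hsub⟩

theorem exists_facet_witness_iff {l : List (Finset X)} {c t : Finset X} (hne : t ≠ c) :
    (∃ s ∈ l, #(facet s ∩ facet c) = Fintype.card X - 1 ∧
      facet t ∩ facet c ⊆ facet s ∩ facet c) ↔ ∃ x ∈ c ∆ t, c ∆ {x} ∈ l := by
  have hX : 1 ≤ Fintype.card X := (hdist_pos hne).trans_le (hdist_le_card t c)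
  have hcard (s : Finset X) :
      Fintype.card X - hdist s c = Fintype.card X - 1 ↔ hdist s c = 1 := by
    have := hdist_le_card s c
    omega
  simp only [card_facet_inter_facet, facet_inter_subset_iff, hcard, hdist_eq_one_iff]
  constructor
  · rintro ⟨_, hs, ⟨x, rfl⟩, hsub⟩
    rw [symmDiff_symmDiff_self', singleton_subset_iff, symmDiff_comm] at hsub
    exact ⟨x, hsub, hs⟩
  · rintro ⟨x, hx, hs⟩
    refine ⟨_, hs, ⟨x, rfl⟩, ?_⟩
    rwa [symmDiff_symmDiff_self', singleton_subset_iff, symmDiff_comm]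

theorem isPartialShelling_map_facet_append_singleton {l : List (Finset X)} {c : Finset X} :
    IsPartialShelling ((l ++ [c]).map facet) ↔
      IsPartialShelling (l.map facet) ∧ IsCornerOf (univ \ l.toFinset) c := by
  rw [List.map_append, List.map_singleton, isPartialShelling_append_singleton,
    isCornerOf_univ_sdiff_iff, List.mem_map_of_injective facet_injective, List.mem_toFinset]
  refine and_congr_right fun _ => and_congr_right fun hc => ?_
  simp only [List.mem_map, forall_exists_index, and_imp, forall_apply_eq_imp_iff₂,
    exists_exists_and_eq_and, List.mem_toFinset]
  exact forall₂_congr fun t ht => exists_facet_witness_iff fun htc => hc (htc ▸ ht)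

end Shellings

section Ample

theorem card_shatterer_filter_mem_add_le {α : Type*} [DecidableEq α] (C : Finset (Finset α))
    (z : α) : #(C.filter (z ∈ ·)).shatterer + #(C.filter (z ∉ ·)).shatterer ≤ #C.shatterer := by
  set A := (C.filter (z ∈ ·)).shatterer
  set B := (C.filter (z ∉ ·)).shatterer
  have hzA : ∀ Y ∈ A, z ∉ Y := fun Y hY hzY => by
    obtain ⟨u, hu, hYu⟩ := (mem_shatterer.1 hY) (empty_subset Y)
    exact eq_empty_iff_forall_notMem.1 hYu z (mem_inter.2 ⟨hzY, (mem_filter.1 hu).2⟩)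
  have hzB : ∀ Y ∈ B, z ∉ Y := fun Y hY hzY => by
    obtain ⟨u, hu, hYu⟩ := (mem_shatterer.1 hY).exists_superset
    exact (mem_filter.1 hu).2 (hYu hzY)
  have hAB : A ∪ B ⊆ C.shatterer :=
    union_subset (shatterer_mono (filter_subset _ _)) (shatterer_mono (filter_subset _ _))
  have hinsert : (A ∩ B).image (insert z) ⊆ C.shatterer := by
    refine forall_mem_image.2 fun Y hY => mem_shatterer.2 fun t ht => ?_
    obtain ⟨hYA, hYB⟩ := mem_inter.1 hY
    by_cases hzt : z ∈ t
    · obtain ⟨u, hu, hYu⟩ := mem_shatterer.1 hYA (t := t.erase z)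
        (by simpa [subset_insert_iff] using ht)
      obtain ⟨hu, hzu⟩ := mem_filter.1 hu
      exact ⟨u, hu, by rw [insert_inter_of_mem hzu, hYu, insert_erase hzt]⟩
    · obtain ⟨u, hu, hYu⟩ := mem_shatterer.1 hYB (t := t)
        (by simpa [subset_insert_iff, erase_eq_of_notMem hzt] using ht)
      obtain ⟨hu, hzu⟩ := mem_filter.1 hu
      exact ⟨u, hu, by rw [insert_inter_of_notMem hzu, hYu]⟩
  have hdisj : Disjoint (A ∪ B) ((A ∩ B).image (insert z)) := by
    refine disjoint_left.2 fun Y hY hY' => ?_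
    obtain ⟨Y', -, rfl⟩ := mem_image.1 hY'
    rcases mem_union.1 hY with h | h
    · exact hzA _ h (mem_insert_self z Y')
    · exact hzB _ h (mem_insert_self z Y')
  have hinj : #((A ∩ B).image (insert z)) = #(A ∩ B) := by
    refine card_image_of_injOn fun Y hY Y' hY' h => ?_
    rw [← erase_insert (hzA Y (mem_inter.1 hY).1), ← erase_insert (hzA Y' (mem_inter.1 hY').1)]
    exact congrArg (erase · z) h
  calc #A + #B = #(A ∪ B) + #(A ∩ B) := (card_union_add_card_inter A B).symm
    _ = #(A ∪ B ∪ (A ∩ B).image (insert z)) := by rw [card_union_of_disjoint hdisj, hinj]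
    _ ≤ #C.shatterer := card_le_card (union_subset hAB hinsert)

theorem shatteredSets_eq_shatterer (C : Finset (Finset X)) : shatteredSets C = C.shatterer := by
  ext Y
  simp only [shatteredSets, _root_.Shatters, mem_filter, mem_univ, true_and, mem_shatterer,
    Finset.Shatters, mem_powerset, inter_comm Y]

theorem isAmple_iff_card_shatterer_le {C : Finset (Finset X)} :
    IsAmple C ↔ #C.shatterer ≤ #C := by
  rw [IsAmple, shatteredSets_eq_shatterer]
  exact ⟨fun h => h.ge, fun h => le_antisymm (card_le_card_shatterer C) h⟩

theorem isAmple_univ : IsAmple (univ : Finset (Finset X)) :=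
  isAmple_iff_card_shatterer_le.2 (card_le_univ _)

theorem IsAmple.filter_mem {C : Finset (Finset X)} (hC : IsAmple C) (z : X) :
    IsAmple (C.filter (z ∈ ·)) ∧ IsAmple (C.filter (z ∉ ·)) := by
  simp only [isAmple_iff_card_shatterer_le] at hC ⊢
  have := card_shatterer_filter_mem_add_le C z
  have := card_le_card_shatterer (C.filter (z ∈ ·))
  have := card_le_card_shatterer (C.filter (z ∉ ·))
  have := card_filter_add_card_filter_not (s := C) (z ∈ ·)
  omega

theorem IsAmple.filter_agree {C : Finset (Finset X)} (hC : IsAmple C) (c W : Finset X) :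
    IsAmple (C.filter fun s => ∀ x ∈ W, x ∈ s ↔ x ∈ c) := by
  induction W using Finset.induction_on with
  | empty => simpa using hC
  | insert z W _ ih =>
    by_cases hz : z ∈ c
    · convert (ih.filter_mem z).1 using 1
      ext s
      simp [hz]
      tauto
    · convert (ih.filter_mem z).2 using 1
      ext s
      simp [hz]
      tauto

theorem IsAmple.inter_cubeAt {C : Finset (Finset X)} (hC : IsAmple C) (c Y : Finset X) :
    IsAmple (C ∩ cubeAt c Y) := by
  convert hC.filter_agree c Yᶜ using 1
  ext s
  simp only [mem_inter, mem_filter, mem_cubeAt, subset_iff, mem_compl, mem_symmDiff]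
  exact and_congr_right fun _ => forall_congr' fun x => by tauto

end Ample

section AmpleCorners

theorem hdist_le_one_of_isAmple_pair {c t : Finset X} (h : IsAmple {c, t}) : hdist c t ≤ 1 := by
  rw [isAmple_iff_card_shatterer_le] at h
  have hsingleton {x : X} (hx : x ∈ c ∆ t) : ({c, t} : Finset (Finset X)).Shatters {x} := by
    intro u hu
    rcases subset_singleton_iff.1 hu with rfl | rfl <;> rw [mem_symmDiff] at hx <;>
      rcases hx with ⟨hxc, hxt⟩ | ⟨hxt, hxc⟩ <;> simp_all
  set E := insert ∅ ((c ∆ t).image (singleton : X → Finset X))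
  have hsub : E ⊆ ({c, t} : Finset (Finset X)).shatterer :=
    insert_subset (mem_shatterer.2 (shatters_empty.2 (insert_nonempty _ _)))
      (forall_mem_image.2 fun x hx => mem_shatterer.2 (hsingleton hx))
  have hcard : #E = hdist c t + 1 := by
    rw [card_insert_of_notMem (by simp), card_image_of_injective _ singleton_injective,
      hdist_eq_card_symmDiff]
  have := card_le_card hsub
  have := card_le_two (a := c) (b := t)
  omega

theorem IsAmple.exists_symmDiff_singleton_mem {C : Finset (Finset X)} (hC : IsAmple C)
    {c d : Finset X} (hc : c ∈ C) (hd : d ∈ C) (hdc : d ≠ c) : ∃ x, c ∆ {x} ∈ C := by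
  obtain ⟨t, ht, hmin⟩ := exists_min_image (C.erase c) (hdist c) ⟨d, mem_erase.2 ⟨hdc, hd⟩⟩
  obtain ⟨htc, ht⟩ := mem_erase.1 ht
  -- a concept of `C` nearest to `c` spans with `c` a fiber of `C` over a cube
  have hpair : C ∩ cubeAt c (c ∆ t) = {c, t} := by
    ext s
    simp only [mem_inter, mem_cubeAt, mem_insert, mem_singleton]
    constructor
    · rintro ⟨hs, hsub⟩
      by_contra! hne
      have hst : c ∆ s = c ∆ t :=
        eq_of_subset_of_card_le hsub (hmin s (mem_erase.2 ⟨hne.1, hs⟩))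
      exact hne.2 (symmDiff_right_injective c hst)
    · rintro (rfl | rfl)
      · simp [hc]
      · exact ⟨ht, subset_rfl⟩
  have hle := hdist_le_one_of_isAmple_pair (hpair ▸ hC.inter_cubeAt c (c ∆ t))
  have hpos := hdist_pos htc.symm
  obtain ⟨x, rfl⟩ := hdist_eq_one_iff.1 (show hdist t c = 1 by rw [hdist_comm]; omega)
  exact ⟨x, ht⟩

theorem IsAmple.eq_of_symmDiff_disjoint_neighborCoords {C : Finset (Finset X)} (hC : IsAmple C)
    {c d : Finset X} (hc : c ∈ C) (hd : d ∈ C)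
    (hcd : Disjoint (c ∆ d) (neighborCoords C c)) : d = c := by
  by_contra hne
  -- no neighbour of `c` in `C` lies in this ample fiber, so `c` is isolated there
  have hfiber := hC.inter_cubeAt c (neighborCoords C c)ᶜ
  have hmem {s : Finset X} (hs : s ∈ C) (hsd : Disjoint (c ∆ s) (neighborCoords C c)) :
      s ∈ C ∩ cubeAt c (neighborCoords C c)ᶜ :=
    mem_inter.2 ⟨hs, mem_cubeAt.2 (subset_compl_iff_disjoint_right.2 hsd)⟩
  obtain ⟨x, hx⟩ := hfiber.exists_symmDiff_singleton_mem (hmem hc (by simp)) (hmem hd hcd) hne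
  obtain ⟨hxC, hxcube⟩ := mem_inter.1 hx
  exact (mem_compl.1 (symmDiff_singleton_mem_cubeAt.1 hxcube)) (mem_neighborCoords.2 hxC)

theorem IsAmple.erase_of_isCornerOf {C : Finset (Finset X)} {c : Finset X} (hC : IsAmple C)
    (h : IsCornerOf C c) : IsAmple (C.erase c) := by
  obtain ⟨hc, hcube⟩ := isCornerOf_iff.1 h
  set N := neighborCoords C c
  have hN : N ∈ C.shatterer := mem_shatterer.2 (shatters_of_cubeAt_subset hcube)
  have hN' : N ∉ (C.erase c).shatterer := fun hs => by
    obtain ⟨d, hd, hdN⟩ := mem_shatterer.1 hs (inter_subset_left (s₁ := N) (s₂ := c))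
    obtain ⟨hdc, hd⟩ := mem_erase.1 hd
    refine hdc (hC.eq_of_symmDiff_disjoint_neighborCoords hc hd
      (disjoint_right.2 fun x hx hx' => ?_))
    have := congrArg (x ∈ ·) hdN
    simp only [mem_inter, eq_iff_iff] at this
    rw [mem_symmDiff] at hx'
    tauto
  rw [isAmple_iff_card_shatterer_le] at hC ⊢
  calc #(C.erase c).shatterer ≤ #(C.shatterer.erase N) :=
        card_le_card fun Y hY => mem_erase.2 ⟨fun h => hN' (h ▸ hY),
          shatterer_mono (erase_subset c C) hY⟩
    _ = #C.shatterer - 1 := card_erase_of_mem hN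
    _ ≤ #C - 1 := Nat.sub_le_sub_right hC 1
    _ = #(C.erase c) := (card_erase_of_mem hc).symm

end AmpleCorners

section Extension

theorem univ_sdiff_toFinset_append_singleton (l : List (Finset X)) (c : Finset X) :
    univ \ (l ++ [c]).toFinset = (univ \ l.toFinset).erase c := by
  ext t
  simp only [mem_sdiff, mem_univ, true_and, List.mem_toFinset, List.mem_append,
    List.mem_singleton, mem_erase]
  tauto

theorem isAmple_univ_sdiff_of_isPartialShelling {l : List (Finset X)}
    (hl : IsPartialShelling (l.map facet)) : IsAmple (univ \ l.toFinset) := by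
  induction l using List.reverseRecOn with
  | nil => simpa using isAmple_univ
  | append_singleton l c ih =>
    obtain ⟨hl, hc⟩ := isPartialShelling_map_facet_append_singleton.1 hl
    rw [univ_sdiff_toFinset_append_singleton]
    exact (ih hl).erase_of_isCornerOf hc

theorem IsCornerPeeling.of_append_singleton {α : Type} [DecidableEq α] {L : List (Finset α)}
    {c : Finset α} (h : IsCornerPeeling (L ++ [c])) :
    IsCornerPeeling L ∧ c ∉ L ∧ IsCornerOf (L ++ [c]).toFinset c := by
  obtain ⟨hnd, hcorner⟩ := h
  refine ⟨⟨hnd.sublist (List.sublist_append_left L [c]), fun i hi => ?_⟩,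
    fun hcL => (List.nodup_append.1 hnd).2.2 c hcL c (List.mem_singleton_self c) rfl, ?_⟩
  · have := hcorner i (by simp; omega)
    rwa [List.take_append_of_le_length hi, List.get_eq_getElem, List.getElem_append_left hi]
      at this
  · have := hcorner L.length (by simp)
    rw [List.take_of_length_le (by simp)] at this
    simpa using this

theorem isPartialShelling_append_reverse_of_isCornerPeeling {L l : List (Finset X)}
    (hL : IsCornerPeeling L) (hl : IsPartialShelling (l.map facet))
    (hLl : L.toFinset = univ \ l.toFinset) : IsPartialShelling ((l ++ L.reverse).map facet) := by
  induction L using List.reverseRecOn generalizing l with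
  | nil => simpa using hl
  | append_singleton L c ih =>
    obtain ⟨hL, hcL, hc⟩ := hL.of_append_singleton
    rw [hLl] at hc
    have hlc := isPartialShelling_map_facet_append_singleton.2 ⟨hl, hc⟩
    rw [List.reverse_append, List.reverse_singleton, List.singleton_append,
      ← List.singleton_append, ← List.append_assoc]
    refine ih hL hlc ?_
    rw [univ_sdiff_toFinset_append_singleton, ← hLl]
    ext t
    simp only [mem_erase, List.mem_toFinset, List.mem_append, List.mem_singleton]
    constructor
    · exact fun ht => ⟨fun htc => hcL (htc ▸ ht), Or.inl ht⟩
    · rintro ⟨htc, ht | rfl⟩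
      exacts [ht, absurd rfl htc]

theorem length_add_length_eq_card {α : Type*} [Fintype α] [DecidableEq α] {l L : List α}
    (hl : l.Nodup) (hL : L.Nodup) (hLl : L.toFinset = univ \ l.toFinset) :
    l.length + L.length = Fintype.card α := by
  rw [← List.toFinset_card_of_nodup hl, ← List.toFinset_card_of_nodup hL, hLl,
    card_univ_sdiff]
  have := card_le_univ l.toFinset
  omega

end Extension

/-- If every ample concept class admits a corner peeling, then every
cross-polytope is extendably shellable: every partial shelling extends to a partial
shelling containing all `2^n` facets. -/
theorem stmt_7
    (hpeel : ∀ (k : ℕ) (C : Finset (Finset (Fin k))), IsAmple C → Dismantlable C) :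
    ∀ (n : ℕ) (l : List (Finset (Fin n))), IsPartialShelling (l.map facet) →
      ∃ l' : List (Finset (Fin n)), l.IsPrefix l' ∧
        IsPartialShelling (l'.map facet) ∧ l'.length = 2 ^ n := by
  intro n l hl
  obtain ⟨L, hLl, hL⟩ := hpeel n _ (isAmple_univ_sdiff_of_isPartialShelling hl)
  refine ⟨l ++ L.reverse, List.prefix_append _ _,
    isPartialShelling_append_reverse_of_isCornerPeeling hL hl hLl, ?_⟩
  rw [List.length_append, List.length_reverse, length_add_length_eq_card (hl.1.of_map facet)
    hL.1 hLl, Fintype.card_finset, Fintype.card_fin]
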